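/- arXiv:2212.04399 — 4 statements merged into one kernel-verified Lean document; each statement's English description precedes it below -/
import Mathlib

section
/- The map X : Ω → 𝒢 sending a pair of binary sequences (ξ, η) ∈ ({-1,1}^ℤ)² to the corner percolation configuration it parametrizes is a bijection between Ω and the set 𝒢 of all corner percolation configurations. -/
/-- A configuration of edges: `c.1 (n, m)` says whether the horizontal edge
`{(n,m),(n+1,m)}` is open, `c.2 (n, m)` whether the vertical edge `{(n,m),(n,m+1)}` is
open. -/
abbrev EdgeConfig := (ℤ × ℤ → Bool) × (ℤ × ℤ → Bool)

/-- The set `𝒢` of corner percolation configurations: at each vertex exactly one of the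
two incident horizontal edges is open and exactly one of the two incident vertical edges
is open. -/
def cornerConfigs : Set EdgeConfig :=
  {c | ∀ x : ℤ × ℤ, c.1 (x.1 - 1, x.2) = ! c.1 x ∧ c.2 (x.1, x.2 - 1) = ! c.2 x}

/-- The parametrization map `X`: a pair of two-sided `±1`-sequences (encoded as boolean
sequences, `true` standing for `1`) gives the configuration where the vertical edge
`{(i,k),(i,k+1)}` is open iff (`ξ i = 1` and `i+k` is odd) or (`ξ i = -1` and `i+k` is
even), and the horizontal edge `{(k,i),(k+1,i)}` is open iff (`η i = 1` and `k+i` is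
odd) or (`η i = -1` and `k+i` is even). -/
def Xmap (ω : (ℤ → Bool) × (ℤ → Bool)) : EdgeConfig :=
  (fun x => ω.2 x.2 == decide (Odd (x.1 + x.2)),
   fun x => ω.1 x.1 == decide (Odd (x.1 + x.2)))

lemma odd_flip (a b : ℤ) (h : a = b - 1 ∨ a = b + 1) :
    decide (Odd a) = ! decide (Odd b) := by
  rw [← decide_not, decide_eq_decide]
  simp only [Int.odd_iff]
  omega

lemma dec_odd_true {n : ℤ} (h : n % 2 = 1) : decide (Odd n) = true := by
  simp [Int.odd_iff, h]

lemma dec_odd_false {n : ℤ} (h : n % 2 = 0) : decide (Odd n) = false := by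
  simp only [Int.odd_iff, decide_eq_false_iff_not]
  omega

lemma key_const (f : ℤ → Bool) (h : ∀ n : ℤ, f (n - 1) = ! f n) (n : ℤ) :
    (f n == decide (Odd n)) = (f 0 == decide (Odd (0 : ℤ))) := by
  induction n using Int.induction_on with
  | zero => rfl
  | succ k ih =>
      have h1 : f ((k : ℤ) + 1) = ! f k := by
        have h' := h ((k : ℤ) + 1)
        rw [add_sub_cancel_right] at h'
        rw [h', Bool.not_not]
      have h2 : decide (Odd ((k : ℤ) + 1)) = ! decide (Odd (k : ℤ)) :=
        odd_flip _ _ (Or.inr rfl)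
      rw [← ih, h1, h2]
      cases f k <;> cases decide (Odd (k : ℤ)) <;> rfl
  | pred k ih =>
      have h1 : f (-(k : ℤ) - 1) = ! f (-k) := h (-k)
      have h2 : decide (Odd (-(k : ℤ) - 1)) = ! decide (Odd (-(k : ℤ))) :=
        odd_flip _ _ (Or.inl rfl)
      rw [h1, h2, ← ih]
      cases f (-(k : ℤ)) <;> cases decide (Odd (-(k : ℤ))) <;> rfl

lemma key (f : ℤ → Bool) (h : ∀ n : ℤ, f (n - 1) = ! f n) (a b : ℤ) :
    f a = ((f b == decide (Odd b)) == decide (Odd a)) := by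
  rw [show (f b == decide (Odd b)) = (f a == decide (Odd a)) by
    rw [key_const f h a, key_const f h b]]
  cases f a <;> cases decide (Odd a) <;> rfl

lemma hparity (a b : ℤ) :
    decide (Odd (a + b)) = (decide (Odd (1 - b)) == decide (Odd a)) := by
  rcases Int.emod_two_eq a with ha | ha <;> rcases Int.emod_two_eq b with hb | hb
  · rw [dec_odd_false (show (a + b) % 2 = 0 by omega),
      dec_odd_true (show (1 - b) % 2 = 1 by omega), dec_odd_false ha]; rfl
  · rw [dec_odd_true (show (a + b) % 2 = 1 by omega),
      dec_odd_false (show (1 - b) % 2 = 0 by omega), dec_odd_false ha]; rfl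
  · rw [dec_odd_true (show (a + b) % 2 = 1 by omega),
      dec_odd_true (show (1 - b) % 2 = 1 by omega), dec_odd_true ha]; rfl
  · rw [dec_odd_false (show (a + b) % 2 = 0 by omega),
      dec_odd_false (show (1 - b) % 2 = 0 by omega), dec_odd_true ha]; rfl

/-- The map `X` is a bijection from `Ω = ({-1,1}^ℤ)²` onto the set `𝒢` of corner
percolation configurations. -/
theorem stmt_3 : Set.BijOn Xmap Set.univ cornerConfigs := by
  refine ⟨?_, ?_, ?_⟩
  · intro ω _ x
    constructor
    · show (ω.2 x.2 == decide (Odd (x.1 - 1 + x.2)))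
        = !(ω.2 x.2 == decide (Odd (x.1 + x.2)))
      rw [odd_flip (x.1 - 1 + x.2) (x.1 + x.2) (Or.inl (by ring))]
      cases ω.2 x.2 <;> cases decide (Odd (x.1 + x.2)) <;> rfl
    · show (ω.1 x.1 == decide (Odd (x.1 + (x.2 - 1))))
        = !(ω.1 x.1 == decide (Odd (x.1 + x.2)))
      rw [odd_flip (x.1 + (x.2 - 1)) (x.1 + x.2) (Or.inl (by ring))]
      cases ω.1 x.1 <;> cases decide (Odd (x.1 + x.2)) <;> rfl
  · intro ω1 _ ω2 _ h
    have e1 : ∀ i : ℤ, ω1.1 i = ω2.1 i := by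
      intro i
      have h' := congrFun (congrArg Prod.snd h) (i, 1 - i)
      simp only [Xmap] at h'
      rw [show i + (1 - i) = 1 by ring, dec_odd_true (by norm_num)] at h'
      simpa using h'
    have e2 : ∀ i : ℤ, ω1.2 i = ω2.2 i := by
      intro i
      have h' := congrFun (congrArg Prod.fst h) (1 - i, i)
      simp only [Xmap] at h'
      rw [show (1 - i) + i = 1 by ring, dec_odd_true (by norm_num)] at h'
      simpa using h'
    exact Prod.ext (funext e1) (funext e2)
  · intro c hc
    refine ⟨(fun i => c.2 (i, 1 - i), fun i => c.1 (1 - i, i)), Set.mem_univ _, ?_⟩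
    refine Prod.ext (funext ?_) (funext ?_) <;> rintro ⟨a, b⟩
    · show (c.1 (1 - b, b) == decide (Odd (a + b))) = c.1 (a, b)
      rw [hparity a b,
        key (fun n => c.1 (n, b)) (fun n => (hc (n, b)).1) a (1 - b)]
      cases c.1 (1 - b, b) <;> cases decide (Odd (1 - b)) <;>
        cases decide (Odd a) <;> rfl
    · show (c.2 (a, 1 - a) == decide (Odd (a + b))) = c.2 (a, b)
      rw [add_comm a b, hparity b a,
        key (fun n => c.2 (a, n)) (fun n => (hc (a, n)).2) b (1 - a)]
      cases c.2 (a, 1 - a) <;> cases decide (Odd (1 - a)) <;>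
        cases decide (Odd b) <;> rfl
end

section
/- Let q ∈ (1/2, 1] and let (Xₙ)ₙ and (Yₘ)ₘ be any two-sided integer sequences with X₀ = Y₀ = 0 and increments in {−1, 1} (so |Yₘ| ≤ |m| for all m). Suppose K ≥ 16/(2q−1) is an integer such that for all n ≥ K, Xₙ/n − (2q−1)/2 > (2q−1)/4 and X₋ₙ/n − (1−2q)/2 < (1−2q)/4. Then for all n ≥ K and all integers m with 0 ≤ m ≤ (2q−1)n/2, one has ⌈(Xₙ + Yₘ)/2⌉ > 1 and ⌈(X₋ₙ + Y₋ₘ)/2⌉ < −1. -/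
/-- The key deterministic estimate for the construction of the event forcing an infinite
path: if the walk `X` has tail behaviour controlled as indicated beyond some
`K ≥ 16/(2q-1)`, then the heights `⌈(Xₙ + Yₘ)/2⌉` are `> 1` in the cone
`{n ≥ K, 0 ≤ m ≤ (2q-1)n/2}` and `< -1` in the opposite cone. -/
theorem stmt_5 (q : ℝ) (hq : 1 / 2 < q) (hq1 : q ≤ 1)
    (X Y : ℤ → ℤ) (hX0 : X 0 = 0) (hY0 : Y 0 = 0)
    (hXinc : ∀ n : ℤ, X (n + 1) - X n = 1 ∨ X (n + 1) - X n = -1)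
    (hYinc : ∀ m : ℤ, Y (m + 1) - Y m = 1 ∨ Y (m + 1) - Y m = -1)
    (K : ℤ) (hK : (K : ℝ) ≥ 16 / (2 * q - 1))
    (hXtail : ∀ n : ℤ, n ≥ K →
      (X n : ℝ) / n - (2 * q - 1) / 2 > (2 * q - 1) / 4 ∧
      (X (-n) : ℝ) / n - (1 - 2 * q) / 2 < (1 - 2 * q) / 4) :
    ∀ n : ℤ, n ≥ K → ∀ m : ℤ, 0 ≤ m → (m : ℝ) ≤ (2 * q - 1) * n / 2 →
      (⌈((X n + Y m : ℤ) : ℚ) / 2⌉ > 1 ∧ ⌈((X (-n) + Y (-m) : ℤ) : ℚ) / 2⌉ < -1) := by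
  have hc : (0:ℝ) < 2 * q - 1 := by linarith
  -- bound |Y k| ≤ k for both signs
  have hY : ∀ k : ℕ, |Y k| ≤ k ∧ |Y (-(k:ℤ))| ≤ k := by
    intro k
    induction k with
    | zero => simp [hY0]
    | succ k ih =>
      obtain ⟨ih1, ih2⟩ := ih
      rw [abs_le] at ih1 ih2
      have h1 := hYinc (k : ℤ)
      have h2 := hYinc (-(k:ℤ) - 1)
      have e : (-(k:ℤ) - 1 + 1) = -(k:ℤ) := by ring
      rw [e] at h2
      have e2 : (-((k:ℤ)+1)) = -(k:ℤ) - 1 := by ring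
      constructor <;> rw [abs_le] <;> push_cast <;> rw [e2] <;>
        constructor <;> rcases h1 with h | h <;> rcases h2 with h' | h' <;> linarith
  intro n hn m hm0 hm
  have hn' : (K:ℝ) ≤ n := by exact_mod_cast hn
  have hKpos : (0:ℝ) < K := lt_of_lt_of_le (by positivity) hK
  have hnpos : (0:ℝ) < n := lt_of_lt_of_le hKpos hn'
  have hcK : (16:ℝ) ≤ (2*q-1) * K := by
    rw [ge_iff_le, div_le_iff₀ hc] at hK; linarith
  have hcn : (2*q-1) * (K:ℝ) ≤ (2*q-1) * n := by nlinarith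
  obtain ⟨h1, h2⟩ := hXtail n hn
  have hdiv : (X n : ℝ) / n * n = X n := div_mul_cancel₀ _ (ne_of_gt hnpos)
  have hdiv2 : (X (-n) : ℝ) / n * n = X (-n) := div_mul_cancel₀ _ (ne_of_gt hnpos)
  have hXn : 3*(2*q-1)/4 * (n:ℝ) < X n := by
    have h1' : 3*(2*q-1)/4 < (X n : ℝ)/n := by linarith
    nlinarith [mul_lt_mul_of_pos_right h1' hnpos]
  have hXneg : (X (-n) : ℝ) < -(3*(2*q-1)/4) * n := by
    have h2' : (X (-n) : ℝ)/n < -(3*(2*q-1)/4) := by linarith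
    nlinarith [mul_lt_mul_of_pos_right h2' hnpos]
  -- Y bounds
  obtain ⟨hYm, hYnm⟩ := hY m.toNat
  rw [Int.toNat_of_nonneg hm0] at hYm hYnm
  rw [abs_le] at hYm hYnm
  have hYmR : -(m:ℝ) ≤ Y m := by exact_mod_cast hYm.1
  have hYnmR : (Y (-m) : ℝ) ≤ m := by exact_mod_cast hYnm.2
  -- sum bounds in ℝ
  have hs1 : (4:ℝ) < ((X n + Y m : ℤ) : ℝ) := by push_cast; linarith
  have hs2 : ((X (-n) + Y (-m) : ℤ) : ℝ) < -4 := by push_cast; linarith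
  have hz1 : (4:ℤ) < X n + Y m := by exact_mod_cast hs1
  have hz2 : X (-n) + Y (-m) < -4 := by exact_mod_cast hs2
  constructor
  · rw [gt_iff_lt, Int.lt_ceil]
    have : (4:ℚ) < ((X n + Y m : ℤ) : ℚ) := by exact_mod_cast hz1
    linarith
  · rw [show (-1:ℤ) = -2 + 1 by ring, Int.lt_add_one_iff, Int.ceil_le]
    have : ((X (-n) + Y (-m) : ℤ) : ℚ) < -4 := by exact_mod_cast hz2
    push_cast at this ⊢
    linarith
end

section
/- Let (ξ,η) and (ξ̃,η̃) in ({-1,1}^ℤ)² agree on all indices i with |i| > K, and suppose ξ(i) = η(i) = 1 for all |i| ≤ K. Let (Xₙ,Yₘ) and (X̃ₙ,Ỹₘ) be the associated partial-sum walks. Then for all n ≥ K and all m ≥ 0, ⌈(Xₙ+Yₘ)/2⌉ ≥ ⌈(X̃ₙ+Ỹₘ)/2⌉; and for all n ≤ −K and m ≤ 0, ⌈(Xₙ+Yₘ)/2⌉ ≤ ⌈(X̃ₙ+Ỹₘ)/2⌉. -/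
/-!
Since `ξ'` and `η'` take values `≤ 1`, the hypotheses give `ξ' ≤ ξ` and `η' ≤ η` pointwise.
A walk is monotone in its steps at nonnegative times and antitone at nonpositive times, and
`a ↦ ⌈a / 2⌉` is monotone. If `K ≥ 0`, both times lie on the same side of `0` in each case;
if `K < 0`, the two pairs of sequences coincide.
-/

/-- The two-sided partial-sum walk of a sequence `s : ℤ → ℤ`. -/
noncomputable def walk (s : ℤ → ℤ) (n : ℤ) : ℤ :=
  if 0 ≤ n then ∑ i ∈ Finset.Icc 1 n, s i else - ∑ i ∈ Finset.Icc (n + 1) 0, s i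

lemma walk_le_walk_of_nonneg {s t : ℤ → ℤ} (h : s ≤ t) {n : ℤ} (hn : 0 ≤ n) :
    walk s n ≤ walk t n := by
  simp only [walk, if_pos hn]
  exact Finset.sum_le_sum fun i _ => h i

lemma walk_le_walk_of_nonpos {s t : ℤ → ℤ} (h : s ≤ t) {n : ℤ} (hn : n ≤ 0) :
    walk t n ≤ walk s n := by
  rcases hn.eq_or_lt with rfl | hn
  · simp [walk]
  · simp only [walk, if_neg hn.not_ge, neg_le_neg_iff]
    exact Finset.sum_le_sum fun i _ => h i

lemma le_of_eq_one_on_block {K : ℤ} {s s' : ℤ → ℤ} (hs' : ∀ i, s' i ≤ 1)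
    (hout : ∀ i : ℤ, K < |i| → s i = s' i) (hblock : ∀ i : ℤ, |i| ≤ K → s i = 1) :
    s' ≤ s := by
  intro i
  rcases le_or_gt |i| K with hi | hi
  · exact (hblock i hi).symm ▸ hs' i
  · exact (hout i hi).ge

lemma ceil_half_mono : Monotone fun a : ℤ => ⌈(a : ℚ) / 2⌉ :=
  fun _ _ h => Int.ceil_mono (by gcongr)

theorem stmt_8_general (K : ℤ) (ξ η ξ' η' : ℤ → ℤ)
    (hξ' : ∀ i, ξ' i = 1 ∨ ξ' i = -1) (hη' : ∀ i, η' i = 1 ∨ η' i = -1)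
    (hout : ∀ i : ℤ, K < |i| → ξ i = ξ' i ∧ η i = η' i)
    (hblock : ∀ i : ℤ, |i| ≤ K → ξ i = 1 ∧ η i = 1) :
    (∀ n m : ℤ, n ≥ K → m ≥ 0 →
      ⌈((walk ξ n + walk η m : ℤ) : ℚ) / 2⌉ ≥ ⌈((walk ξ' n + walk η' m : ℤ) : ℚ) / 2⌉) ∧
    (∀ n m : ℤ, n ≤ -K → m ≤ 0 →
      ⌈((walk ξ n + walk η m : ℤ) : ℚ) / 2⌉ ≤ ⌈((walk ξ' n + walk η' m : ℤ) : ℚ) / 2⌉) := by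
  rcases lt_or_ge K 0 with hK | hK
  · have hout' i := hout i (hK.trans_le (abs_nonneg i))
    obtain rfl : ξ' = ξ := funext fun i => (hout' i).1.symm
    obtain rfl : η' = η := funext fun i => (hout' i).2.symm
    exact ⟨fun _ _ _ _ => le_rfl, fun _ _ _ _ => le_rfl⟩
  have hξ : ξ' ≤ ξ := le_of_eq_one_on_block (fun i => by rcases hξ' i with h | h <;> omega)
    (fun i hi => (hout i hi).1) (fun i hi => (hblock i hi).1)
  have hη : η' ≤ η := le_of_eq_one_on_block (fun i => by rcases hη' i with h | h <;> omega)
    (fun i hi => (hout i hi).2) (fun i hi => (hblock i hi).2)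
  refine ⟨fun n m hn hm => ceil_half_mono ?_, fun n m hn hm => ceil_half_mono ?_⟩
  · exact add_le_add (walk_le_walk_of_nonneg hξ (by omega)) (walk_le_walk_of_nonneg hη hm)
  · exact add_le_add (walk_le_walk_of_nonpos hξ (by omega)) (walk_le_walk_of_nonpos hη hm)

/-- Monotonicity of the height under maximizing the block `⟦-K,K⟧`: if `(ξ,η)` and
`(ξ',η')` are `±1`-sequences agreeing outside `⟦-K,K⟧`, and `(ξ,η)` is identically `1`
on `⟦-K,K⟧`, then for `n ≥ K`, `m ≥ 0` the height `⌈(Xₙ+Yₘ)/2⌉` computed from `(ξ,η)`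
dominates the one computed from `(ξ',η')`, and the reverse inequality holds for
`n ≤ -K`, `m ≤ 0`. -/
theorem stmt_8 (K : ℤ) (ξ η ξ' η' : ℤ → ℤ)
    (hξ : ∀ i, ξ i = 1 ∨ ξ i = -1) (hη : ∀ i, η i = 1 ∨ η i = -1)
    (hξ' : ∀ i, ξ' i = 1 ∨ ξ' i = -1) (hη' : ∀ i, η' i = 1 ∨ η' i = -1)
    (hout : ∀ i : ℤ, K < |i| → ξ i = ξ' i ∧ η i = η' i)
    (hblock : ∀ i : ℤ, |i| ≤ K → ξ i = 1 ∧ η i = 1) :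
    (∀ n m : ℤ, n ≥ K → m ≥ 0 →
      ⌈((walk ξ n + walk η m : ℤ) : ℚ) / 2⌉ ≥ ⌈((walk ξ' n + walk η' m : ℤ) : ℚ) / 2⌉) ∧
    (∀ n m : ℤ, n ≤ -K → m ≤ 0 →
      ⌈((walk ξ n + walk η m : ℤ) : ℚ) / 2⌉ ≤ ⌈((walk ξ' n + walk η' m : ℤ) : ℚ) / 2⌉) :=
  stmt_8_general K ξ η ξ' η' hξ' hη' hout hblock
end

section
/- For the corner percolation configuration X(ξ,η) with height function H(n+1/2, m+1/2) = ⌈(Xₙ+Yₘ)/2⌉, along any connected component all black faces adjacent to the component have the same height, and all white faces adjacent to the component have the same height; moreover these two heights differ by exactly 1. Consequently, the 'level' of a component (the common height of adjacent black faces) is well defined. -/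
/-- In the configuration `X(ξ,η)`, the vertical edge `{(i,k),(i,k+1)}` is open. -/
def vOpen (ξ : ℤ → ℤ) (i k : ℤ) : Prop :=
  (ξ i = 1 ∧ Odd (i + k)) ∨ (ξ i = -1 ∧ Even (i + k))

/-- In the configuration `X(ξ,η)`, the horizontal edge `{(k,i),(k+1,i)}` is open. -/
def hOpen (η : ℤ → ℤ) (k i : ℤ) : Prop :=
  (η i = 1 ∧ Odd (k + i)) ∨ (η i = -1 ∧ Even (k + i))

/-- The height `H(n+1/2, m+1/2) = ⌈(Xₙ + Yₘ)/2⌉` of the face indexed by `(n,m)`. -/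
noncomputable def height (ξ η : ℤ → ℤ) (n m : ℤ) : ℤ :=
  ⌈((walk ξ n + walk η m : ℤ) : ℚ) / 2⌉

/-- The graph on `ℤ²` whose edges are the open edges of the configuration `X(ξ,η)`. -/
def configGraph (ξ η : ℤ → ℤ) : SimpleGraph (ℤ × ℤ) :=
  SimpleGraph.fromRel (fun x y =>
    (y = (x.1, x.2 + 1) ∧ vOpen ξ x.1 x.2) ∨ (y = (x.1 + 1, x.2) ∧ hOpen η x.1 x.2))

/-- The four corners of the face indexed by `(n,m)`, i.e. the face `(n+1/2, m+1/2)`. -/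
def corners (n m : ℤ) : Set (ℤ × ℤ) := {(n, m), (n + 1, m), (n, m + 1), (n + 1, m + 1)}

/-- The face indexed by `(n,m)` is adjacent to the connected component of `x₀`: one of
the four edges bounding the face is open and lies in the component of `x₀`. -/
def faceAdjComp (ξ η : ℤ → ℤ) (x₀ : ℤ × ℤ) (n m : ℤ) : Prop :=
  ∃ u v : ℤ × ℤ, (configGraph ξ η).Adj u v ∧ (configGraph ξ η).Reachable x₀ u ∧
    u ∈ corners n m ∧ v ∈ corners n m

/-!
With `Xₙ = walk ξ n` and `Yₘ = walk η m`, the sum `Xₙ + Yₘ` has the parity of the colour `n + m`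
of the face, so the height is `(Xₙ + Yₘ)/2` on black faces and `(Xₙ + Yₘ + 1)/2` on white ones.
Crossing the vertical line `x = i` changes `X` by `ξ i`, and the rule deciding which vertical
edges are open there says precisely that, across an open edge, the white face is one higher than
the black one. A vertex has at most one open vertical and one open horizontal edge, so two
distinct open edges at a vertex bound a common corner face; comparing both edges with it shows
that their black faces have equal heights, and this propagates along walks in the component.
-/

open Finset

section
variable {ξ η : ℤ → ℤ}

lemma walk_sub_one_add (s : ℤ → ℤ) (n : ℤ) : walk s (n - 1) + s n = walk s n := by
  rcases le_or_gt 1 n with hn | hn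
  · rw [walk, walk, if_pos (by omega), if_pos (by omega),
      ← insert_Icc_sub_one_right_eq_Icc hn, sum_insert (by simp), add_comm]
  · have walk_of_nonpos : ∀ k ≤ 0, walk s k = -∑ i ∈ Icc (k + 1) 0, s i := by
      intro k hk
      rcases hk.lt_or_eq with hk | rfl
      · exact if_neg (by omega)
      · simp [walk]
    rw [walk_of_nonpos n (by omega), walk_of_nonpos (n - 1) (by omega), sub_add_cancel,
      ← insert_Icc_add_one_left_eq_Icc (by omega : n ≤ 0), sum_insert (by simp)]
    ring

lemma walk_emod_two {s : ℤ → ℤ} (hs : ∀ i, s i = 1 ∨ s i = -1) (n : ℤ) :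
    walk s n % 2 = n % 2 := by
  induction n using Int.induction_on with
  | zero => simp [walk]
  | succ i ih =>
    have step := walk_sub_one_add s (i + 1)
    rw [add_sub_cancel_right] at step
    rcases hs (i + 1) with h | h <;> omega
  | pred i ih =>
    have step := walk_sub_one_add s (-i)
    rcases hs (-i) with h | h <;> omega

lemma height_eq_neg_ediv (n m : ℤ) :
    height ξ η n m = -(-(walk ξ n + walk η m) / 2) := by
  have h := Rat.ceil_intCast_div_natCast (walk ξ n + walk η m) 2
  simp only [Nat.cast_ofNat] at h
  exact h

lemma height_comm (n m : ℤ) : height ξ η n m = height η ξ m n := by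
  rw [height, height, add_comm]

lemma height_add_one_of_vOpen (hξ : ∀ i, ξ i = 1 ∨ ξ i = -1) (hη : ∀ i, η i = 1 ∨ η i = -1)
    {i k n n' : ℤ} (h : vOpen ξ i k) (hn : n = i - 1 ∨ n = i) (hn' : n' = i - 1 ∨ n' = i)
    (he : Even (n + k)) (ho : Odd (n' + k)) :
    height ξ η n' k = height ξ η n k + 1 := by
  have step := walk_sub_one_add ξ i
  have hX := walk_emod_two hξ (i - 1)
  have hY := walk_emod_two hη k
  rw [height_eq_neg_ediv, height_eq_neg_ediv]
  simp only [vOpen, Int.even_iff, Int.odd_iff] at h he ho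
  rcases hn with rfl | rfl <;> rcases hn' with rfl | rfl <;> omega

lemma height_add_one_of_hOpen (hξ : ∀ i, ξ i = 1 ∨ ξ i = -1) (hη : ∀ i, η i = 1 ∨ η i = -1)
    {k i m m' : ℤ} (h : hOpen η k i) (hm : m = i - 1 ∨ m = i) (hm' : m' = i - 1 ∨ m' = i)
    (he : Even (k + m)) (ho : Odd (k + m')) :
    height ξ η k m' = height ξ η k m + 1 := by
  rw [height_comm, height_comm (m := m)]
  rw [hOpen, add_comm k i] at h
  rw [add_comm] at he ho
  exact height_add_one_of_vOpen hη hξ h hm hm' he ho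

lemma mem_corners {a b n m : ℤ} :
    (a, b) ∈ corners n m ↔ (a = n ∨ a = n + 1) ∧ (b = m ∨ b = m + 1) := by
  simp only [corners, Set.mem_insert_iff, Set.mem_singleton_iff, Prod.mk.injEq]
  omega

lemma configGraph_adj {a b c d : ℤ} (h : (configGraph ξ η).Adj (a, b) (c, d)) :
    (a = c ∧ ∃ k, vOpen ξ a k ∧ (b = k ∧ d = k + 1 ∨ b = k + 1 ∧ d = k)) ∨
      (b = d ∧ ∃ k, hOpen η k b ∧ (a = k ∧ c = k + 1 ∨ a = k + 1 ∧ c = k)) := by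
  rw [configGraph, SimpleGraph.fromRel_adj] at h
  obtain ⟨-, (⟨h, ho⟩ | ⟨h, ho⟩) | (⟨h, ho⟩ | ⟨h, ho⟩)⟩ := h <;>
    obtain ⟨rfl, rfl⟩ := Prod.mk.injEq _ _ _ _ ▸ h
  · exact Or.inl ⟨rfl, b, ho, Or.inl ⟨rfl, rfl⟩⟩
  · exact Or.inr ⟨rfl, a, ho, Or.inl ⟨rfl, rfl⟩⟩
  · exact Or.inl ⟨rfl, d, ho, Or.inr ⟨rfl, rfl⟩⟩
  · exact Or.inr ⟨rfl, c, ho, Or.inr ⟨rfl, rfl⟩⟩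

lemma height_white_eq_black_add_one (hξ : ∀ i, ξ i = 1 ∨ ξ i = -1)
    (hη : ∀ i, η i = 1 ∨ η i = -1) {u v : ℤ × ℤ} {n m n' m' : ℤ}
    (huv : (configGraph ξ η).Adj u v) (hu : u ∈ corners n m) (hv : v ∈ corners n m)
    (he : Even (n + m)) (hu' : u ∈ corners n' m') (hv' : v ∈ corners n' m')
    (ho : Odd (n' + m')) :
    height ξ η n' m' = height ξ η n m + 1 := by
  obtain ⟨a, b⟩ := u; obtain ⟨c, d⟩ := v
  rw [mem_corners] at hu hv hu' hv'
  rcases configGraph_adj huv with ⟨rfl, k, hk, hbd⟩ | ⟨rfl, k, hk, hac⟩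
  · obtain ⟨rfl, rfl⟩ : m = k ∧ m' = k := by omega
    exact height_add_one_of_vOpen hξ hη hk (by omega) (by omega) he ho
  · obtain ⟨rfl, rfl⟩ : n = k ∧ n' = k := by omega
    exact height_add_one_of_hOpen hξ hη hk (by omega) (by omega) he ho

lemma eq_of_mem_corners_of_even {u v : ℤ × ℤ} {n m n' m' : ℤ} (huv : u ≠ v)
    (hu : u ∈ corners n m) (hv : v ∈ corners n m) (he : Even (n + m))
    (hu' : u ∈ corners n' m') (hv' : v ∈ corners n' m') (he' : Even (n' + m')) :
    n = n' ∧ m = m' := by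
  obtain ⟨a, b⟩ := u; obtain ⟨c, d⟩ := v
  simp only [mem_corners, ne_eq, Prod.mk.injEq, Int.even_iff] at *
  omega

lemma exists_even_corners_of_adj {u v : ℤ × ℤ} (h : (configGraph ξ η).Adj u v) :
    ∃ n m, Even (n + m) ∧ u ∈ corners n m ∧ v ∈ corners n m := by
  obtain ⟨a, b⟩ := u; obtain ⟨c, d⟩ := v
  simp only [mem_corners, Int.even_iff]
  rcases configGraph_adj h with ⟨rfl, k, -, hbd⟩ | ⟨rfl, k, -, hac⟩
  · rcases Int.emod_two_eq_zero_or_one (a + k) with hp | hp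
    · exact ⟨a, k, by omega⟩
    · exact ⟨a - 1, k, by omega⟩
  · rcases Int.emod_two_eq_zero_or_one (k + b) with hp | hp
    · exact ⟨k, b, by omega⟩
    · exact ⟨k, b - 1, by omega⟩

lemma exists_corners_of_adj_of_adj {u v w : ℤ × ℤ} (hv : (configGraph ξ η).Adj u v)
    (hw : (configGraph ξ η).Adj u w) (hvw : v ≠ w) :
    ∃ n m, u ∈ corners n m ∧ v ∈ corners n m ∧ w ∈ corners n m := by
  obtain ⟨a, b⟩ := u; obtain ⟨c, d⟩ := v; obtain ⟨e, f⟩ := w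
  simp only [ne_eq, Prod.mk.injEq] at hvw
  rcases configGraph_adj hv with ⟨rfl, k, hk, hbd⟩ | ⟨rfl, k, hk, hac⟩ <;>
    rcases configGraph_adj hw with ⟨rfl, l, hl, hbf⟩ | ⟨rfl, l, hl, hae⟩
  · simp only [vOpen, Int.odd_iff, Int.even_iff] at hk hl
    omega
  · exact ⟨l, k, by simp only [mem_corners]; omega⟩
  · exact ⟨k, l, by simp only [mem_corners]; omega⟩
  · simp only [hOpen, Int.odd_iff, Int.even_iff] at hk hl
    omega

lemma height_eq_of_adj_of_adj (hξ : ∀ i, ξ i = 1 ∨ ξ i = -1)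
    (hη : ∀ i, η i = 1 ∨ η i = -1) {u v w : ℤ × ℤ} {n m n' m' : ℤ}
    (hv : (configGraph ξ η).Adj u v) (hw : (configGraph ξ η).Adj u w)
    (hu : u ∈ corners n m) (hvF : v ∈ corners n m) (he : Even (n + m))
    (hu' : u ∈ corners n' m') (hwF : w ∈ corners n' m') (he' : Even (n' + m')) :
    height ξ η n m = height ξ η n' m' := by
  by_cases hvw : v = w
  · subst hvw
    obtain ⟨rfl, rfl⟩ := eq_of_mem_corners_of_even hv.ne hu hvF he hu' hwF he'
    rfl
  obtain ⟨p, q, hup, hvp, hwp⟩ := exists_corners_of_adj_of_adj hv hw hvw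
  rcases Int.even_or_odd (p + q) with hpq | hpq
  · obtain ⟨rfl, rfl⟩ := eq_of_mem_corners_of_even hv.ne hu hvF he hup hvp hpq
    obtain ⟨rfl, rfl⟩ := eq_of_mem_corners_of_even hw.ne hu' hwF he' hup hwp hpq
    rfl
  · have := height_white_eq_black_add_one hξ hη hv hu hvF he hup hvp hpq
    have := height_white_eq_black_add_one hξ hη hw hu' hwF he' hup hwp hpq
    omega

lemma height_eq_of_reachable (hξ : ∀ i, ξ i = 1 ∨ ξ i = -1)
    (hη : ∀ i, η i = 1 ∨ η i = -1) {u u' v v' : ℤ × ℤ} {n m n' m' : ℤ}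
    (hr : (configGraph ξ η).Reachable u u')
    (hv : (configGraph ξ η).Adj u v) (hu : u ∈ corners n m) (hvF : v ∈ corners n m)
    (he : Even (n + m)) (hv' : (configGraph ξ η).Adj u' v') (hu' : u' ∈ corners n' m')
    (hvF' : v' ∈ corners n' m') (he' : Even (n' + m')) :
    height ξ η n m = height ξ η n' m' := by
  obtain ⟨p⟩ := hr
  induction p generalizing v n m with
  | nil => exact height_eq_of_adj_of_adj hξ hη hv hv' hu hvF he hu' hvF' he'
  | cons h p ih =>
    obtain ⟨N, M, hN, huN, hwN⟩ := exists_even_corners_of_adj h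
    exact (height_eq_of_adj_of_adj hξ hη hv h hu hvF he huN hwN hN).trans
      (ih h.symm hwN huN hN hv' hu')

lemma height_eq_of_faceAdjComp_of_even (hξ : ∀ i, ξ i = 1 ∨ ξ i = -1)
    (hη : ∀ i, η i = 1 ∨ η i = -1) (x₀ : ℤ × ℤ) (n m n' m' : ℤ)
    (hF : faceAdjComp ξ η x₀ n m) (hF' : faceAdjComp ξ η x₀ n' m')
    (he : Even (n + m)) (he' : Even (n' + m')) :
    height ξ η n m = height ξ η n' m' := by
  obtain ⟨u, v, huv, hx₀u, hu, hv⟩ := hF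
  obtain ⟨u', v', hu'v', hx₀u', hu', hv'⟩ := hF'
  exact height_eq_of_reachable hξ hη (hx₀u.symm.trans hx₀u') huv hu hv he hu'v' hu' hv' he'

lemma exists_faceAdjComp_even_of_odd (hξ : ∀ i, ξ i = 1 ∨ ξ i = -1)
    (hη : ∀ i, η i = 1 ∨ η i = -1) {x₀ : ℤ × ℤ} {n m : ℤ}
    (hF : faceAdjComp ξ η x₀ n m) (ho : Odd (n + m)) :
    ∃ N M, faceAdjComp ξ η x₀ N M ∧ Even (N + M) ∧ height ξ η n m = height ξ η N M + 1 := by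
  obtain ⟨u, v, huv, hx₀u, hu, hv⟩ := hF
  obtain ⟨N, M, he, huN, hvN⟩ := exists_even_corners_of_adj huv
  exact ⟨N, M, ⟨u, v, huv, hx₀u, huN, hvN⟩, he,
    height_white_eq_black_add_one hξ hη huv huN hvN he hu hv ho⟩

end

/-- Along any connected component of a corner percolation configuration, all adjacent
black faces (those with `n+m` even) have the same height, all adjacent white faces have
the same height, and these two heights differ by exactly `1`. Hence the level of a
component is well defined. -/
theorem stmt_15 (ξ η : ℤ → ℤ)
    (hξ : ∀ i, ξ i = 1 ∨ ξ i = -1) (hη : ∀ i, η i = 1 ∨ η i = -1) (x₀ : ℤ × ℤ) :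
    (∀ n m n' m' : ℤ, faceAdjComp ξ η x₀ n m → faceAdjComp ξ η x₀ n' m' →
      Even (n + m) → Even (n' + m') → height ξ η n m = height ξ η n' m') ∧
    (∀ n m n' m' : ℤ, faceAdjComp ξ η x₀ n m → faceAdjComp ξ η x₀ n' m' →
      Odd (n + m) → Odd (n' + m') → height ξ η n m = height ξ η n' m') ∧
    (∀ n m n' m' : ℤ, faceAdjComp ξ η x₀ n m → faceAdjComp ξ η x₀ n' m' →
      Even (n + m) → Odd (n' + m') → |height ξ η n m - height ξ η n' m'| = 1) := by
  have black := height_eq_of_faceAdjComp_of_even hξ hη x₀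
  refine ⟨black, ?_, ?_⟩
  · intro n m n' m' hF hF' ho ho'
    obtain ⟨N, M, hG, hN, hn⟩ := exists_faceAdjComp_even_of_odd hξ hη hF ho
    obtain ⟨N', M', hG', hN', hn'⟩ := exists_faceAdjComp_even_of_odd hξ hη hF' ho'
    rw [hn, hn', black N M N' M' hG hG' hN hN']
  · intro n m n' m' hF hF' he ho'
    obtain ⟨N', M', hG', hN', hn'⟩ := exists_faceAdjComp_even_of_odd hξ hη hF' ho'
    rw [hn', black n m N' M' hF hG' he hN']
    simp
end
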